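/- arXiv:1102.2805 — 3 statements merged into one kernel-verified Lean document; each statement's English description precedes it below -/
import Mathlib

section
/- For any real numbers a, b with a² + b² > 0, the integral ∫₀^∞ (1/(2π t)) exp( -|y - μ t|²/(2t) ) dt, where y = (a, b) ∈ ℝ² \ {0} and μ = (λ₁, -λ₂) with λ₁, λ₂ > 0, equals (1/π) exp(λ₁ a - λ₂ b) K₀( √((λ₁² + λ₂²)(a² + b²)) ), where K₀ is the modified Bessel function of the second kind of order 0. -/
open Real MeasureTheory

/-- Modified Bessel function of the second kind of integer index `n`,
via the standard integral representation `K_n(x) = ∫₀^∞ e^{-x cosh t} cosh(n t) dt`. -/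
noncomputable def besselK (n : ℕ) (x : ℝ) : ℝ :=
  ∫ t in Set.Ioi (0 : ℝ), Real.exp (-x * Real.cosh t) * Real.cosh (n * t)

/-!
Completing the square in the exponent, `|y - μt|² / (2t) = |y|²/(2t) - ⟨μ, y⟩ + |μ|² t/2`,
splits off the factor `e^{⟨μ, y⟩}` and leaves the classical integral
`∫₀^∞ t⁻¹ e^{-p/t - qt} dt = 2 K₀(2√(pq))`. The substitution `t = eᵘ` turns the latter
into an integral over the whole line, and since `p e^{-u} + q eᵘ = 2√(pq) cosh (u - u₀)`
with `e^{u₀} = √(p/q)`, a translation and the evenness of `cosh` give `2 K₀(2√(pq))`.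
-/

lemma besselK_zero_eq_integral (x : ℝ) :
    besselK 0 x = ∫ t in Set.Ioi (0 : ℝ), exp (-x * cosh t) := by
  simp [besselK]

lemma integral_exp_neg_mul_cosh (x : ℝ) :
    ∫ u, exp (-x * cosh u) = 2 * besselK 0 x := by
  simpa only [cosh_abs, besselK_zero_eq_integral] using
    integral_comp_abs (f := fun u ↦ exp (-x * cosh u))

lemma integral_comp_exp {E : Type*} [NormedAddCommGroup E] [NormedSpace ℝ E] (g : ℝ → E) :
    ∫ u, exp u • g (exp u) = ∫ y in Set.Ioi 0, g y := by
  rw [← range_exp, ← Set.image_univ]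
  simpa [abs_of_pos (exp_pos _)] using (integral_image_eq_integral_abs_deriv_smul
      MeasurableSet.univ (fun x _ ↦ (hasDerivAt_exp x).hasDerivWithinAt)
      exp_injective.injOn g).symm

lemma sq_mul_exp_neg_add_sq_mul_exp {s t : ℝ} (hs : 0 < s) (ht : 0 < t) (u : ℝ) :
    s ^ 2 * exp (-u) + t ^ 2 * exp u = 2 * (s * t) * cosh (u - log (s / t)) := by
  rw [cosh_eq, neg_sub, exp_sub, exp_sub, exp_log (div_pos hs ht), exp_neg]
  field_simp
  ring

theorem integral_inv_mul_exp_neg_div_add_mul {p q : ℝ} (hp : 0 < p) (hq : 0 < q) :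
    ∫ t in Set.Ioi 0, t⁻¹ * exp (-(p / t + q * t)) = 2 * besselK 0 (2 * √(p * q)) := by
  have hexponent (u : ℝ) :
      -(p / exp u + q * exp u) = -(2 * √(p * q)) * cosh (u - log (√p / √q)) := by
    rw [neg_mul, sqrt_mul hp.le, ← sq_mul_exp_neg_add_sq_mul_exp (sqrt_pos.2 hp) (sqrt_pos.2 hq),
      sq_sqrt hp.le, sq_sqrt hq.le, exp_neg, div_eq_mul_inv]
  rw [← integral_comp_exp]
  simp only [smul_eq_mul, ← mul_assoc, mul_inv_cancel₀ (exp_ne_zero _), one_mul, hexponent]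
  rw [integral_sub_right_eq_self (fun u ↦ exp (-(2 * √(p * q)) * cosh u)),
    integral_exp_neg_mul_cosh]

theorem stmt3_general (l1 l2 : ℝ) (hl1 : 0 < l1)
    (a b : ℝ) (hab : 0 < a ^ 2 + b ^ 2) :
    (∫ t in Set.Ioi (0 : ℝ),
        (1 / (2 * Real.pi * t)) *
          Real.exp (-(((a - l1 * t) ^ 2 + (b - (-l2) * t) ^ 2) / (2 * t))))
      = (1 / Real.pi) * Real.exp (l1 * a - l2 * b) *
          besselK 0 (Real.sqrt ((l1 ^ 2 + l2 ^ 2) * (a ^ 2 + b ^ 2))) := by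
  set p := (a ^ 2 + b ^ 2) / 2
  set q := (l1 ^ 2 + l2 ^ 2) / 2
  have hsquare : ∀ t ∈ Set.Ioi (0 : ℝ),
      (1 / (2 * π * t)) * exp (-(((a - l1 * t) ^ 2 + (b - (-l2) * t) ^ 2) / (2 * t)))
        = (2 * π)⁻¹ * exp (l1 * a - l2 * b) * (t⁻¹ * exp (-(p / t + q * t))) := by
    intro t (ht : 0 < t)
    have hexponent : -(((a - l1 * t) ^ 2 + (b - (-l2) * t) ^ 2) / (2 * t))
        = (l1 * a - l2 * b) + -(p / t + q * t) := by
      field_simp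
      ring
    rw [hexponent, exp_add]
    field_simp
  have hargument : √((l1 ^ 2 + l2 ^ 2) * (a ^ 2 + b ^ 2)) = 2 * √(p * q) := by
    rw [show p * q = (l1 ^ 2 + l2 ^ 2) * (a ^ 2 + b ^ 2) / 2 ^ 2 by ring,
      sqrt_div' _ (by positivity), sqrt_sq zero_le_two]
    ring
  rw [setIntegral_congr_fun measurableSet_Ioi hsquare, integral_const_mul,
    integral_inv_mul_exp_neg_div_add_mul (by positivity) (by positivity), hargument]
  ring

/-- The Green's function of planar Brownian motion with drift μ = (λ₁, -λ₂):
∫₀^∞ (1/(2πt)) e^{-|y-μt|²/(2t)} dt = (1/π) e^{λ₁a - λ₂b} K₀(√((λ₁²+λ₂²)(a²+b²))). -/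
theorem stmt3 (l1 l2 : ℝ) (hl1 : 0 < l1) (hl2 : 0 < l2)
    (a b : ℝ) (hab : 0 < a ^ 2 + b ^ 2) :
    (∫ t in Set.Ioi (0 : ℝ),
        (1 / (2 * Real.pi * t)) *
          Real.exp (-(((a - l1 * t) ^ 2 + (b - (-l2) * t) ^ 2) / (2 * t))))
      = (1 / Real.pi) * Real.exp (l1 * a - l2 * b) *
          besselK 0 (Real.sqrt ((l1 ^ 2 + l2 ^ 2) * (a ^ 2 + b ^ 2))) :=
  stmt3_general l1 l2 hl1 a b hab
end

section
/- Let λ₁, λ₂ > 0 and ε > 0. Then (1/ε)·log[ (2 + 2ελ₁ + ε²(λ₁² + λ₂²) - √(ε²(λ₁² + λ₂²)(ε²λ₂² + (2 + ελ₁)²))) / (2 + 2ελ₁) ] converges to -√(λ₁² + λ₂²) as ε → 0⁺. -/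
/-!
Writing `L = √(λ₁² + λ₂²)`, the square root factors as `ε L √(ε²λ₂² + (2 + ελ₁)²)`, so the
argument of the logarithm is `1 + ε h(ε)` with `h` continuous at `0` and `h(0) = -L`. Then
`ε ↦ ε h(ε)` has derivative `h(0)` at `0`, hence so does `ε ↦ log (1 + ε h(ε))`, and the
expression in the limit is its difference quotient at `0`.
-/

open Real Filter Topology

theorem hasDerivAt_mul_of_continuousAt {𝕜 : Type*} [NontriviallyNormedField 𝕜] {h : 𝕜 → 𝕜}
    (hh : ContinuousAt h 0) : HasDerivAt (fun ε => ε * h ε) (h 0) 0 := by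
  rw [hasDerivAt_iff_tendsto_slope]
  refine hh.tendsto.mono_left nhdsWithin_le_nhds |>.congr' ?_
  filter_upwards [self_mem_nhdsWithin] with ε (hε : ε ≠ 0)
  rw [slope_def_field]
  field_simp
  ring

theorem tendsto_log_one_add_mul_div {h : ℝ → ℝ} (hh : ContinuousAt h 0) :
    Tendsto (fun ε => log (1 + ε * h ε) / ε) (𝓝[≠] 0) (𝓝 (h 0)) := by
  have hderiv : HasDerivAt (fun ε => log (1 + ε * h ε)) (h 0) 0 := by
    simpa using ((hasDerivAt_mul_of_continuousAt hh).const_add 1).log (by simp)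
  refine hderiv.tendsto_slope.congr fun ε => ?_
  simp [slope_def_field]

noncomputable def gaseousRate (l1 l2 ε : ℝ) : ℝ :=
  (ε * (l1 ^ 2 + l2 ^ 2) - √(l1 ^ 2 + l2 ^ 2) * √(ε ^ 2 * l2 ^ 2 + (2 + ε * l1) ^ 2))
    / (2 + 2 * ε * l1)

theorem gaseousRate_zero (l1 l2 : ℝ) : gaseousRate l1 l2 0 = -√(l1 ^ 2 + l2 ^ 2) := by
  have h2 : √((0 : ℝ) ^ 2 * l2 ^ 2 + (2 + 0 * l1) ^ 2) = 2 := by norm_num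
  simp only [gaseousRate, h2]
  ring

theorem continuousAt_gaseousRate (l1 l2 : ℝ) : ContinuousAt (gaseousRate l1 l2) 0 :=
  ContinuousAt.div (by fun_prop) (by fun_prop) (by norm_num)

theorem one_add_mul_gaseousRate {l1 l2 ε : ℝ} (hε : 0 ≤ ε) (hden : 2 + 2 * ε * l1 ≠ 0) :
    1 + ε * gaseousRate l1 l2 ε = (2 + 2 * ε * l1 + ε ^ 2 * (l1 ^ 2 + l2 ^ 2)
      - √(ε ^ 2 * (l1 ^ 2 + l2 ^ 2) * (ε ^ 2 * l2 ^ 2 + (2 + ε * l1) ^ 2))) / (2 + 2 * ε * l1) := by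
  rw [sqrt_mul (by positivity), sqrt_mul (by positivity), sqrt_sq hε, gaseousRate,
    mul_div_assoc', one_add_div hden]
  ring

theorem stmt5_general (l1 l2 : ℝ) :
    Tendsto (fun ε : ℝ =>
        (1 / ε) * Real.log ((2 + 2 * ε * l1 + ε ^ 2 * (l1 ^ 2 + l2 ^ 2)
            - Real.sqrt (ε ^ 2 * (l1 ^ 2 + l2 ^ 2) * (ε ^ 2 * l2 ^ 2 + (2 + ε * l1) ^ 2)))
          / (2 + 2 * ε * l1)))
      (nhdsWithin 0 (Set.Ioi 0)) (nhds (-Real.sqrt (l1 ^ 2 + l2 ^ 2))) := by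
  have hlim := tendsto_log_one_add_mul_div (continuousAt_gaseousRate l1 l2)
  rw [gaseousRate_zero] at hlim
  have hden : ∀ᶠ ε in 𝓝[>] (0 : ℝ), 2 + 2 * ε * l1 ≠ 0 :=
    nhdsWithin_le_nhds <| (continuous_const.add (by fun_prop)).continuousAt.eventually_ne
      (by norm_num : (2 : ℝ) + 2 * 0 * l1 ≠ 0)
  refine (hlim.mono_left (nhdsWithin_mono _ fun ε (hε : 0 < ε) => hε.ne')).congr' ?_
  filter_upwards [hden, self_mem_nhdsWithin] with ε hε (hεpos : 0 < ε)
  rw [one_add_mul_gaseousRate hεpos.le hε, one_div_mul_eq_div]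

/-- (1/ε)·log[(2 + 2ελ₁ + ε²(λ₁²+λ₂²) - √(ε²(λ₁²+λ₂²)(ε²λ₂² + (2+ελ₁)²)))/(2 + 2ελ₁)]
→ -√(λ₁²+λ₂²) as ε → 0⁺. -/
theorem stmt5 (l1 l2 : ℝ) (hl1 : 0 < l1) (hl2 : 0 < l2) :
    Tendsto (fun ε : ℝ =>
        (1 / ε) * Real.log ((2 + 2 * ε * l1 + ε ^ 2 * (l1 ^ 2 + l2 ^ 2)
            - Real.sqrt (ε ^ 2 * (l1 ^ 2 + l2 ^ 2) * (ε ^ 2 * l2 ^ 2 + (2 + ε * l1) ^ 2)))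
          / (2 + 2 * ε * l1)))
      (nhdsWithin 0 (Set.Ioi 0)) (nhds (-Real.sqrt (l1 ^ 2 + l2 ^ 2))) :=
  stmt5_general l1 l2
end

section
/- Let P(z,w) = 4 + t⁴ - t²(w + w⁻¹) - t²(z + z⁻¹) with t > 0. Then P has no zeros on the unit torus {|z| = |w| = 1} if and only if t ≠ √2; at t = √2 the only zero on the unit torus is z = w = 1. -/
/-!
On the unit circle `z + z⁻¹ = 2 Re z`, so on the unit torus
`P = (t² - 2)² + 2t²(1 - Re z) + 2t²(1 - Re w)`, a sum of three nonnegative terms.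
It vanishes exactly when `t² = 2` and `Re z = Re w = 1`, that is `z = w = 1`.
-/

namespace Complex

lemma add_inv_eq_two_re_of_norm_eq_one {z : ℂ} (hz : ‖z‖ = 1) :
    z + z⁻¹ = ((2 * z.re : ℝ) : ℂ) := by
  rw [inv_def, normSq_eq_norm_sq, hz]
  simp [add_conj]

lemma eq_one_of_norm_eq_one_of_re_eq_one {z : ℂ} (hz : ‖z‖ = 1) (hre : z.re = 1) : z = 1 :=
  ext hre (abs_re_eq_norm.mp (by rw [hre, hz, abs_one]))

end Complex

noncomputable def squareOctagonP (t : ℝ) (z w : ℂ) : ℂ :=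
  4 + (t : ℂ) ^ 4 - (t : ℂ) ^ 2 * (w + w⁻¹) - (t : ℂ) ^ 2 * (z + z⁻¹)

section UnitTorus

variable {t : ℝ} {z w : ℂ}

lemma squareOctagonP_eq_sum_of_norm_eq_one (hz : ‖z‖ = 1) (hw : ‖w‖ = 1) :
    squareOctagonP t z w
      = (((t ^ 2 - 2) ^ 2 + 2 * t ^ 2 * (1 - z.re) + 2 * t ^ 2 * (1 - w.re) : ℝ) : ℂ) := by
  rw [squareOctagonP, Complex.add_inv_eq_two_re_of_norm_eq_one hz,
    Complex.add_inv_eq_two_re_of_norm_eq_one hw]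
  push_cast
  ring

lemma squareOctagonP_eq_zero_iff (ht : t ≠ 0) (hz : ‖z‖ = 1) (hw : ‖w‖ = 1) :
    squareOctagonP t z w = 0 ↔ t ^ 2 = 2 ∧ z = 1 ∧ w = 1 := by
  rw [squareOctagonP_eq_sum_of_norm_eq_one hz hw, Complex.ofReal_eq_zero]
  have hzre : z.re ≤ 1 := hz ▸ Complex.re_le_norm z
  have hwre : w.re ≤ 1 := hw ▸ Complex.re_le_norm w
  have ht2 : 0 < t ^ 2 := by positivity
  constructor
  · intro h
    have hsq : (t ^ 2 - 2) ^ 2 = 0 := by nlinarith [sq_nonneg (t ^ 2 - 2)]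
    have hz1 : z.re = 1 := by nlinarith [sq_nonneg (t ^ 2 - 2)]
    have hw1 : w.re = 1 := by nlinarith [sq_nonneg (t ^ 2 - 2)]
    exact ⟨sub_eq_zero.mp (pow_eq_zero_iff two_ne_zero |>.mp hsq),
      Complex.eq_one_of_norm_eq_one_of_re_eq_one hz hz1,
      Complex.eq_one_of_norm_eq_one_of_re_eq_one hw hw1⟩
  · rintro ⟨h2, rfl, rfl⟩
    simp [h2]

end UnitTorus

/-- P(z,w) = 4 + t⁴ - t²(w+w⁻¹) - t²(z+z⁻¹) has no zeros on the unit torus iff t ≠ √2,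
and at t = √2 the only zero on the unit torus is z = w = 1. -/
theorem stmt18 (t : ℝ) (ht : 0 < t) :
    ((∀ z w : ℂ, ‖z‖ = 1 → ‖w‖ = 1 →
        4 + (t : ℂ) ^ 4 - (t : ℂ) ^ 2 * (w + w⁻¹) - (t : ℂ) ^ 2 * (z + z⁻¹) ≠ 0)
      ↔ t ≠ Real.sqrt 2)
    ∧ (t = Real.sqrt 2 → ∀ z w : ℂ, ‖z‖ = 1 → ‖w‖ = 1 →
        (4 + (t : ℂ) ^ 4 - (t : ℂ) ^ 2 * (w + w⁻¹) - (t : ℂ) ^ 2 * (z + z⁻¹) = 0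
          ↔ z = 1 ∧ w = 1)) := by
  have hsqrt : t ^ 2 = 2 ↔ t = Real.sqrt 2 := by
    rw [eq_comm (b := Real.sqrt 2), Real.sqrt_eq_iff_eq_sq zero_le_two ht.le, eq_comm]
  have hzero (z w : ℂ) (hz : ‖z‖ = 1) (hw : ‖w‖ = 1) :=
    squareOctagonP_eq_zero_iff ht.ne' hz hw
  refine ⟨⟨fun hnone hcrit => ?_, fun hne z w hz hw hP => ?_⟩, fun hcrit z w hz hw => ?_⟩
  · exact hnone 1 1 norm_one norm_one
      ((hzero 1 1 norm_one norm_one).mpr ⟨hsqrt.mpr hcrit, rfl, rfl⟩)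
  · exact hne (hsqrt.mp ((hzero z w hz hw).mp hP).1)
  · exact (hzero z w hz hw).trans (and_iff_right (hsqrt.mpr hcrit))
end
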